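/- Let σ: Π → Γ be a strong formal subdivision of rank 0 between lower Eulerian posets and suppose Γ is near-Eulerian. Then Π is near-Eulerian, σ extends to a strong formal subdivision σ̃: Σ̃Π ∪ {1̂} → Σ̃Γ ∪ {1̂} between the corresponding Eulerian posets obtained from the semisuspensions (namely the extension of σ over Σ̃Γ ∪ {1̂}, which sends the semisuspension vertex q_Π to q_Γ), and σ^{-1}(∂Γ) = ∂Π. -/

import Mathlib

open scoped Classical

noncomputable section

namespace CDIndex

variable {α β : Type}

/-- The natural rank function of a graded poset: `rho x` is one less than the largest
cardinality of a chain contained in `Set.Iic x` (i.e. the length of a maximal chain of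
the interval `[0̂, x]`). -/
def rho [PartialOrder α] (x : α) : ℕ :=
  sSup {k : ℕ | ∃ s : Finset α,
    IsChain (· ≤ ·) (s : Set α) ∧ (s : Set α) ⊆ Set.Iic x ∧ s.card = k + 1}

/-- A subset `S` of a poset is graded of rank `n` if every maximal chain of `S`
has exactly `n + 1` elements (i.e. length `n`). -/
def IsGradedSetOfRank [PartialOrder α] (S : Set α) (n : ℕ) : Prop :=
  ∀ s : Finset α, (s : Set α) ⊆ S → IsChain (· ≤ ·) (s : Set α) →
    (∀ t : Finset α, (t : Set α) ⊆ S → IsChain (· ≤ ·) (t : Set α) → s ⊆ t → s = t) →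
    s.card = n + 1

/-- A poset is graded of rank `n` if every maximal chain has length `n`. -/
def IsGradedOfRank (α : Type) [PartialOrder α] (n : ℕ) : Prop :=
  IsGradedSetOfRank (Set.univ : Set α) n

/-- Every interval `[s, t]` with `s < t`, `s, t ∈ S`, has equally many elements of even
rank and of odd rank. -/
def BalancedIntervalsIn [PartialOrder α] (S : Set α) : Prop :=
  ∀ s ∈ S, ∀ t ∈ S, s < t →
    {y ∈ Set.Icc s t | Even (rho y)}.ncard = {y ∈ Set.Icc s t | Odd (rho y)}.ncard

/-- An Eulerian poset of rank `n`: a graded poset with `0̂` and `1̂` in which every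
interval of positive length has equally many elements of each parity of rank. -/
def IsEulerianOfRank (α : Type) [PartialOrder α] (n : ℕ) : Prop :=
  (∃ b : α, ∀ z, b ≤ z) ∧ (∃ t : α, ∀ z, z ≤ t) ∧
    IsGradedOfRank α n ∧ BalancedIntervalsIn (Set.univ : Set α)

/-- A lower Eulerian poset of rank `n`: a graded poset with `0̂` all of whose intervals
are Eulerian. -/
def IsLowerEulerianOfRank (α : Type) [PartialOrder α] (n : ℕ) : Prop :=
  (∃ b : α, ∀ z, b ≤ z) ∧ IsGradedOfRank α n ∧ BalancedIntervalsIn (Set.univ : Set α)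

/-- A lower order ideal `S` (of a poset) which is lower Eulerian of rank `n`. -/
def IsLowerEulerianSetOfRank [PartialOrder α] (S : Set α) (n : ℕ) : Prop :=
  IsGradedSetOfRank S n ∧ BalancedIntervalsIn S

/-- The boundary of (a lower order ideal `S` of) a graded poset of rank `n`: the lower
order ideal generated by the rank `n - 1` elements which are covered by exactly one
element. -/
def boundaryIn [PartialOrder α] (S : Set α) (n : ℕ) : Set α :=
  {y | y ∈ S ∧ ∃ x ∈ S, rho x = n - 1 ∧ {z ∈ S | x ⋖ z}.ncard = 1 ∧ y ≤ x}

/-- The boundary `∂P` of a graded poset of rank `n`. -/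
def boundary (α : Type) [PartialOrder α] (n : ℕ) : Set α :=
  boundaryIn (Set.univ : Set α) n

/-- `α` is a near-Eulerian poset of rank `n`: it is obtained from an Eulerian poset `Q`
of rank `n + 1` by removing the maximal element and one element `q` of rank `n`. -/
def IsNearEulerianOfRank (α : Type) [PartialOrder α] [Finite α] (n : ℕ) : Prop :=
  ∃ (Q : Type) (_ : PartialOrder Q) (_ : Finite Q) (q top : Q),
    IsEulerianOfRank Q (n + 1) ∧ (∀ z, z ≤ top) ∧ rho q = n ∧ q ≠ top ∧
    Nonempty (α ≃o {x : Q // x ≠ q ∧ x ≠ top})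

/-- `α` is (isomorphic to) the boundary of an Eulerian poset, where `α` has rank `n`
(so the Eulerian poset has rank `n + 1`). -/
def IsBoundaryOfEulerianOfRank (α : Type) [PartialOrder α] [Finite α] (n : ℕ) : Prop :=
  ∃ (Q : Type) (_ : PartialOrder Q) (_ : Finite Q) (top : Q),
    IsEulerianOfRank Q (n + 1) ∧ (∀ z, z ≤ top) ∧
    Nonempty (α ≃o {x : Q // x ≠ top})

/-! ### The semisuspension -/

/-- The semisuspension of `α` relative to a set `S` (intended: `S = ∂α`): the poset `α`
together with one new element `q` lying above `0̂` and above every element of `S`. -/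
@[ext] structure Semisusp (α : Type) (S : Set α) : Type where
  toOpt : Option α

namespace Semisusp

variable {S : Set α}

/-- The new vertex `q` of the semisuspension. -/
def q : Semisusp α S := ⟨none⟩

/-- The inclusion of `α` into its semisuspension. -/
def incl (a : α) : Semisusp α S := ⟨some a⟩

instance instPartialOrder [PartialOrder α] [OrderBot α] : PartialOrder (Semisusp α S) where
  le x y := match x, y with
    | ⟨some a⟩, ⟨some b⟩ => a ≤ b
    | ⟨some a⟩, ⟨none⟩ => a = ⊥ ∨ ∃ s ∈ S, a ≤ s
    | ⟨none⟩, ⟨some _⟩ => False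
    | ⟨none⟩, ⟨none⟩ => True
  le_refl x := by rcases x with ⟨_ | a⟩ <;> simp
  le_trans x y z hxy hyz := by
    rcases x with ⟨_ | a⟩ <;> rcases y with ⟨_ | b⟩ <;> rcases z with ⟨_ | c⟩ <;>
      simp_all
    · rcases hyz with h | ⟨s, hs, hbs⟩
      · subst h
        exact Or.inl (le_bot_iff.mp hxy)
      · exact Or.inr ⟨s, hs, le_trans hxy hbs⟩
    · exact le_trans hxy hyz
  le_antisymm x y hxy hyx := by
    rcases x with ⟨_ | a⟩ <;> rcases y with ⟨_ | b⟩ <;> simp_all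
    exact le_antisymm hxy hyx

instance [PartialOrder α] [OrderBot α] : OrderBot (Semisusp α S) where
  bot := ⟨some ⊥⟩
  bot_le x := by
    rcases x with ⟨_ | a⟩
    · exact Or.inl rfl
    · show (⊥ : α) ≤ a
      exact bot_le

def equivOption : Semisusp α S ≃ Option α where
  toFun := toOpt
  invFun := mk
  left_inv _ := rfl
  right_inv _ := rfl

instance [Finite α] : Finite (Semisusp α S) := by
  have := Fintype.ofFinite α
  exact Finite.of_equiv (Option α) (equivOption (S := S)).symm

end Semisusp

/-! ### Strong formal subdivisions -/

/-- A strong formal subdivision (of rank `0`, with the natural rank functions): an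
order-preserving, rank-increasing, surjective map which is strongly surjective and
satisfies the alternating-sum condition on fibers. -/
def IsSFS {α β : Type} [PartialOrder α] [PartialOrder β] (φ : α → β) : Prop :=
  Monotone φ ∧ (∀ y, rho y ≤ rho (φ y)) ∧ Function.Surjective φ ∧
  (∀ y x, φ y ≤ x → ∃ y', y ≤ y' ∧ φ y' = x ∧ rho y' = rho x) ∧
  (∀ y x, φ y ≤ x →
    (∑ᶠ y' ∈ {y' | φ y' = x ∧ y ≤ y'}, ((-1 : ℤ) ^ rho y')) = (-1) ^ rho x)

/-! ### Extensions of posets and poset maps -/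

/-- The extension `Π̃ = Π ∪ (B ∖ Γ)` of a poset `Π` over `B`, along a map
`σ : Π → B` whose image is the lower order ideal `Γ = G ⊆ B`.  Elements are either
elements of `Π` (`Sum.inl`) or elements of `B ∖ G` (`Sum.inr`). -/
@[ext] structure ExtP {α β : Type} (σ : α → β) (G : Set β) : Type where
  elt : α ⊕ {x : β // x ∉ G}

namespace ExtP

variable {σ : α → β} {G : Set β}

instance instPartialOrder [PartialOrder α] [PartialOrder β] : PartialOrder (ExtP σ G) where
  le p q := match p, q with
    | ⟨.inl y⟩, ⟨.inl y'⟩ => y ≤ y'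
    | ⟨.inl y⟩, ⟨.inr x⟩ => ∃ y', y ≤ y' ∧ σ y' ≤ (x : β)
    | ⟨.inr _⟩, ⟨.inl _⟩ => False
    | ⟨.inr x⟩, ⟨.inr x'⟩ => x ≤ x'
  le_refl p := by
    rcases p with ⟨y | x⟩
    · exact (le_refl y : y ≤ y)
    · exact (le_refl x : x ≤ x)
  le_trans p q r hpq hqr := by
    rcases p with ⟨yp | xp⟩ <;> rcases q with ⟨yq | xq⟩ <;> rcases r with ⟨yr | xr⟩
    · exact (le_trans (hpq : yp ≤ yq) (hqr : yq ≤ yr) : yp ≤ yr)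
    · obtain ⟨y', h1, h2⟩ := (hqr : ∃ y', yq ≤ y' ∧ σ y' ≤ (xr : β))
      exact (⟨y', le_trans (hpq : yp ≤ yq) h1, h2⟩ : ∃ y', yp ≤ y' ∧ σ y' ≤ (xr : β))
    · exact (hqr : False).elim
    · obtain ⟨y', h1, h2⟩ := (hpq : ∃ y', yp ≤ y' ∧ σ y' ≤ (xq : β))
      exact (⟨y', h1, le_trans h2 (hqr : (xq : β) ≤ (xr : β))⟩ :
        ∃ y', yp ≤ y' ∧ σ y' ≤ (xr : β))
    · exact (hpq : False).elim
    · exact (hpq : False).elim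
    · exact (hqr : False).elim
    · exact (le_trans (hpq : xp ≤ xq) (hqr : xq ≤ xr) : xp ≤ xr)
  le_antisymm p q hpq hqp := by
    rcases p with ⟨yp | xp⟩ <;> rcases q with ⟨yq | xq⟩
    · have h : yp = yq := le_antisymm (hpq : yp ≤ yq) (hqp : yq ≤ yp)
      subst h; rfl
    · exact (hqp : False).elim
    · exact (hpq : False).elim
    · have h : xp = xq := le_antisymm (hpq : xp ≤ xq) (hqp : xq ≤ xp)
      subst h; rfl

/-- The inclusion of `Π` into the extension. -/
def inclDom (y : α) : ExtP σ G := ⟨.inl y⟩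

/-- The inclusion of `B ∖ Γ` into the extension. -/
def inclCompl (x : {x : β // x ∉ G}) : ExtP σ G := ⟨.inr x⟩

/-- The extension `σ̃ : Π̃ → B` of `σ`: it is `σ` on `Π` and the identity on `B ∖ Γ`. -/
def extMap (σ : α → β) (G : Set β) (p : ExtP σ G) : β :=
  match p.elt with
  | .inl y => σ y
  | .inr x => (x : β)

def equivSum : ExtP σ G ≃ α ⊕ {x : β // x ∉ G} where
  toFun := elt
  invFun := mk
  left_inv _ := rfl
  right_inv _ := rfl

instance [Finite α] [Finite β] : Finite (ExtP σ G) := by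
  have := Fintype.ofFinite α
  have := Fintype.ofFinite β
  exact Finite.of_equiv _ (equivSum (σ := σ) (G := G)).symm

end ExtP

/-!
Write `χ T = ∑_{y ∈ T} (-1)^ρ(y)`. Summing the fiber conditions of an SFS `σ` gives
`χ {y ≥ s | σ y ∈ U} = χ {x ≥ σ s | x ∈ U}`. For `U` everything and `s` of corank one this
counts covers: `s` has as many covers as `σ s`, or two if `σ s` has rank `n`; so the elements
covered by exactly one element, hence the boundaries, correspond under `σ`.

If `Γ = Q ∖ {q₀, 1̂}` is near-Eulerian, `∂Γ` is the part of `Γ` below `q₀`, so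
`B := Σ̃Γ ∪ {1̂} ≅ Q` is Eulerian. The extension `σ̃ : Π̃ → B` is again an SFS (ranks of
`B ∖ Γ` lift to `Π̃` by strong surjectivity), and for `t ∉ Γ` the interval `[s, t]` of `Π̃` is
the full preimage of `[σ̃ s, t]` above `s`, so it has Euler characteristic `0`; intervals inside
`Π` vanish since `Π` is lower Eulerian. Finally `σ⁻¹ ∂Γ = ∂Π` identifies `Π̃` with
`Σ̃Π ∪ {1̂}`, which is therefore Eulerian.
-/

variable {γ : Type}

section Rank

variable [PartialOrder α]

theorem exists_greatest_of_isChain {s : Finset α} (hne : s.Nonempty)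
    (hc : IsChain (· ≤ ·) (s : Set α)) : ∃ m ∈ s, ∀ z ∈ s, z ≤ m := by
  obtain ⟨m, hm, hmax⟩ := s.exists_maximal hne
  refine ⟨m, hm, fun z hz => ?_⟩
  rcases eq_or_ne z m with rfl | hzm
  · exact le_rfl
  · exact (hc hz hm hzm).elim id (hmax hz)

variable [Finite α]

theorem rho_bddAbove (x : α) : BddAbove {k : ℕ | ∃ s : Finset α,
    IsChain (· ≤ ·) (s : Set α) ∧ (s : Set α) ⊆ Set.Iic x ∧ s.card = k + 1} := by
  have := Fintype.ofFinite α
  refine ⟨Fintype.card α, fun k ⟨s, _, _, hcard⟩ => ?_⟩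
  have := s.card_le_univ
  omega

theorem card_le_rho_add_one {x : α} {s : Finset α} (hc : IsChain (· ≤ ·) (s : Set α))
    (hsub : (s : Set α) ⊆ Set.Iic x) : s.card ≤ rho x + 1 := by
  rcases s.eq_empty_or_nonempty with rfl | hne
  · simp
  · have := hne.card_pos
    have : s.card - 1 ≤ rho x := le_csSup (rho_bddAbove x) ⟨s, hc, hsub, by omega⟩
    omega

theorem exists_chain_card_eq_rho_add_one (x : α) : ∃ s : Finset α,
    IsChain (· ≤ ·) (s : Set α) ∧ (s : Set α) ⊆ Set.Iic x ∧ s.card = rho x + 1 :=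
  Nat.sSup_mem (by exact ⟨0, {x}, by simp, by simp, by simp⟩) (rho_bddAbove x)

theorem rho_lt_rho {x y : α} (h : y < x) : rho y < rho x := by
  obtain ⟨s, hc, hsub, hcard⟩ := exists_chain_card_eq_rho_add_one y
  have hx : x ∉ s := fun hx => (hsub hx).not_gt h
  have := card_le_rho_add_one (x := x) (s := insert x s)
    (by rw [Finset.coe_insert]; exact hc.insert fun b hb _ => Or.inr ((hsub hb).trans h.le))
    (by rw [Finset.coe_insert]
        exact Set.insert_subset le_rfl (hsub.trans (Set.Iic_subset_Iic.mpr h.le)))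
  rw [Finset.card_insert_of_notMem hx] at this
  omega

theorem rho_mono : Monotone (rho : α → ℕ) := fun _ _ h =>
  h.eq_or_lt.elim (fun e => e ▸ le_rfl) fun h => (rho_lt_rho h).le

theorem exists_lt_rho_add_one_eq {x : α} (h : rho x ≠ 0) : ∃ y < x, rho y + 1 = rho x := by
  obtain ⟨s, hc, hsub, hcard⟩ := exists_chain_card_eq_rho_add_one x
  have herase := Finset.pred_card_le_card_erase (s := s) (a := x)
  have hc' : IsChain (· ≤ ·) ((s.erase x : Finset α) : Set α) :=
    hc.mono (Finset.coe_subset.mpr (s.erase_subset x))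
  obtain ⟨m, hm, hmax⟩ :=
    exists_greatest_of_isChain (Finset.card_pos.mp (by omega : 0 < (s.erase x).card)) hc'
  have hmx : m < x := lt_of_le_of_ne (hsub (Finset.mem_of_mem_erase hm)) (Finset.ne_of_mem_erase hm)
  have := card_le_rho_add_one hc' fun z hz => hmax z hz
  exact ⟨m, hmx, by have := rho_lt_rho hmx; omega⟩

theorem rho_le_of_forall_lt {x : α} {k : ℕ} (h : ∀ y < x, rho y < k) : rho x ≤ k := by
  by_contra! hk
  obtain ⟨y, hyx, hy⟩ := exists_lt_rho_add_one_eq (x := x) (by omega)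
  have := h y hyx
  omega

theorem rho_eq_zero_of_isMin {x : α} (hx : IsMin x) : rho x = 0 :=
  Nat.le_zero.mp (rho_le_of_forall_lt fun _ hy => (hx.not_lt hy).elim)

theorem covBy_of_rho_eq_add_one {x y : α} (h : x < y) (hr : rho y = rho x + 1) : x ⋖ y :=
  ⟨h, fun _ h₁ h₂ => by have := rho_lt_rho h₁; have := rho_lt_rho h₂; omega⟩

theorem rho_apply_of_isLowerSet_range [PartialOrder β] [Finite β] (e : α ↪o β)
    (he : IsLowerSet (Set.range e)) (a : α) : rho (e a) = rho a := by
  induction a using WellFoundedLT.induction with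
  | _ a ih =>
  refine le_antisymm (rho_le_of_forall_lt fun b hb => ?_) ?_
  · obtain ⟨c, rfl⟩ := he hb.le ⟨a, rfl⟩
    have hca : c < a := e.lt_iff_lt.mp hb
    rw [ih c hca]
    exact rho_lt_rho hca
  · rcases eq_or_ne (rho a) 0 with h | h
    · omega
    · obtain ⟨c, hca, hc⟩ := exists_lt_rho_add_one_eq h
      have := rho_lt_rho (e.lt_iff_lt.mpr hca)
      rw [ih c hca] at this
      omega

theorem rho_orderIso [PartialOrder β] [Finite β] (e : α ≃o β) (a : α) : rho (e a) = rho a :=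
  rho_apply_of_isLowerSet_range e.toOrderEmbedding (by simp [isLowerSet_univ]) a

end Rank

section Chains

variable [PartialOrder α]

def MaxChainIn (S : Set α) (t : Finset α) : Prop :=
  (t : Set α) ⊆ S ∧ IsChain (· ≤ ·) (t : Set α) ∧
    ∀ u : Finset α, (u : Set α) ⊆ S → IsChain (· ≤ ·) (u : Set α) → t ⊆ u → t = u

theorem MaxChainIn.mem_of_forall_le_or_le {S : Set α} {c : Finset α} (hc : MaxChainIn S c)
    {z : α} (hz : z ∈ S) (hcomp : ∀ w ∈ c, w ≤ z ∨ z ≤ w) : z ∈ c := by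
  have := hc.2.2 (insert z c) (by rw [Finset.coe_insert]; exact Set.insert_subset hz hc.1)
    (by rw [Finset.coe_insert]; exact hc.2.1.insert fun b hb _ => (hcomp b hb).symm)
    (Finset.subset_insert z c)
  exact this ▸ Finset.mem_insert_self z c

theorem MaxChainIn.mono {S T : Set α} {c : Finset α} (hc : MaxChainIn S c)
    (hcT : (c : Set α) ⊆ T) (hTS : T ⊆ S) : MaxChainIn T c :=
  ⟨hcT, hc.2.1, fun u hu => hc.2.2 u (hu.trans hTS)⟩

theorem exists_maxChainIn [Finite α] {S : Set α} {s : Finset α} (hsub : (s : Set α) ⊆ S)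
    (hc : IsChain (· ≤ ·) (s : Set α)) : ∃ t, s ⊆ t ∧ MaxChainIn S t := by
  have := Fintype.ofFinite α
  set T := Finset.univ.filter
    fun t : Finset α => (t : Set α) ⊆ S ∧ IsChain (· ≤ ·) (t : Set α) ∧ s ⊆ t
  obtain ⟨t, htT, hmax⟩ := T.exists_max_image Finset.card ⟨s, by simp [T, hsub, hc]⟩
  simp only [T, Finset.mem_filter, Finset.mem_univ, true_and] at htT hmax
  exact ⟨t, htT.2.2, htT.1, htT.2.1, fun u hu hcu htu =>
    Finset.eq_of_subset_of_card_le htu (hmax u ⟨hu, hcu, htT.2.2.trans htu⟩)⟩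

theorem maxChainIn_Iic_of_card_eq [Finite α] {x : α} {s : Finset α}
    (hc : IsChain (· ≤ ·) (s : Set α)) (hsub : (s : Set α) ⊆ Set.Iic x)
    (hcard : s.card = rho x + 1) : MaxChainIn (Set.Iic x) s :=
  ⟨hsub, hc, fun _ hu hcu hsu =>
    Finset.eq_of_subset_of_card_le hsu (hcard ▸ card_le_rho_add_one hcu hu)⟩

theorem exists_maxChainIn_Iic_card_eq [Finite α] (x : α) :
    ∃ c, MaxChainIn (Set.Iic x) c ∧ c.card = rho x + 1 := by
  obtain ⟨s, hc, hsub, hcard⟩ := exists_chain_card_eq_rho_add_one x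
  exact ⟨s, maxChainIn_Iic_of_card_eq hc hsub hcard, hcard⟩

theorem MaxChainIn.union {x y : α} (hxy : x ≤ y) (hgap : ∀ w, x < w → ¬w < y)
    {c d : Finset α} (hc : MaxChainIn (Set.Iic x) c) (hd : MaxChainIn (Set.Ici y) d) :
    MaxChainIn Set.univ (c ∪ d) := by
  have hcx : ∀ w ∈ c, w ≤ x := fun w hw => hc.1 hw
  have hdy : ∀ w ∈ d, y ≤ w := fun w hw => hd.1 hw
  have hxc : x ∈ c := hc.mem_of_forall_le_or_le le_rfl fun w hw => .inl (hcx w hw)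
  have hyd : y ∈ d := hd.mem_of_forall_le_or_le le_rfl fun w hw => .inr (hdy w hw)
  refine ⟨Set.subset_univ _, ?_, fun u _ hu hcdu => ?_⟩
  · intro a ha b hb _
    rw [Finset.coe_union] at ha hb
    rcases ha with ha | ha <;> rcases hb with hb | hb
    · exact hc.2.1.total ha hb
    · exact .inl ((hcx a ha).trans (hxy.trans (hdy b hb)))
    · exact .inr ((hcx b hb).trans (hxy.trans (hdy a ha)))
    · exact hd.2.1.total ha hb
  refine Finset.Subset.antisymm hcdu fun w hw => ?_
  have hcomp : ∀ v ∈ c ∪ d, v ≤ w ∨ w ≤ v := fun v hv =>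
    hu.total (Finset.mem_coe.mpr (hcdu hv)) (Finset.mem_coe.mpr hw)
  by_cases hwx : w ≤ x
  · exact Finset.mem_union_left _ (hc.mem_of_forall_le_or_le hwx
      fun v hv => hcomp v (Finset.mem_union_left _ hv))
  by_cases hyw : y ≤ w
  · exact Finset.mem_union_right _ (hd.mem_of_forall_le_or_le hyw
      fun v hv => hcomp v (Finset.mem_union_right _ hv))
  have hxw : x < w := lt_of_le_not_ge
    ((hcomp x (Finset.mem_union_left _ hxc)).resolve_right hwx) hwx
  have hwy : w < y := lt_of_le_not_ge
    ((hcomp y (Finset.mem_union_right _ hyd)).resolve_left hyw) hyw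
  exact (hgap w hxw hwy).elim

end Chains

theorem IsGradedOfRank.card_eq [PartialOrder α] {n : ℕ} (hg : IsGradedOfRank α n)
    {c : Finset α} (hc : MaxChainIn Set.univ c) : c.card = n + 1 :=
  hg c hc.1 hc.2.1 hc.2.2

section Graded

variable [PartialOrder α] [Finite α] {n : ℕ}

theorem IsGradedOfRank.rho_le (hg : IsGradedOfRank α n) (x : α) : rho x ≤ n := by
  obtain ⟨s, hc, -, hcard⟩ := exists_chain_card_eq_rho_add_one x
  obtain ⟨t, hst, ht⟩ := exists_maxChainIn (Set.subset_univ _) hc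
  have := Finset.card_le_card hst
  have := hg.card_eq ht
  omega

theorem IsGradedOfRank.rho_eq_of_isMax (hg : IsGradedOfRank α n) {x : α} (hx : IsMax x) :
    rho x = n := by
  obtain ⟨c, hc, hcard⟩ := exists_maxChainIn_Iic_card_eq x
  have hxc : x ∈ c := hc.mem_of_forall_le_or_le le_rfl fun w hw => .inl (hc.1 hw)
  have := hg.card_eq (c := c) ⟨Set.subset_univ _, hc.2.1, fun u _ hu hcu =>
    hc.2.2 u (fun w hw => (hu.total hw (Finset.mem_coe.mpr (hcu hxc))).elim id (@hx w)) hu hcu⟩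
  omega

theorem IsGradedOfRank.rho_covBy (hg : IsGradedOfRank α n) {x y : α} (h : x ⋖ y) :
    rho y = rho x + 1 := by
  obtain ⟨cx, hcx, hcxcard⟩ := exists_maxChainIn_Iic_card_eq x
  obtain ⟨cy, hcy, hcycard⟩ := exists_maxChainIn_Iic_card_eq y
  obtain ⟨d, -, hd⟩ := exists_maxChainIn (S := Set.Ici y) (s := {y}) (by simp) (by simp)
  have hA := hg.card_eq (hcx.union h.le (fun w h₁ h₂ => h.2 h₁ h₂) hd)
  have hB := hg.card_eq (hcy.union le_rfl (fun w h₁ h₂ => h₁.not_gt h₂) hd)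
  have hdisj : Disjoint cx d := Finset.disjoint_left.mpr fun w hwx hwd =>
    (lt_of_le_of_lt (hcx.1 hwx) h.1).not_ge (hd.1 hwd)
  have hinter : cy ∩ d = {y} := by
    refine Finset.eq_singleton_iff_unique_mem.mpr ⟨Finset.mem_inter.mpr ⟨?_, ?_⟩, ?_⟩
    · exact hcy.mem_of_forall_le_or_le le_rfl fun w hw => .inl (hcy.1 hw)
    · exact hd.mem_of_forall_le_or_le le_rfl fun w hw => .inr (hd.1 hw)
    · intro w hw
      rw [Finset.mem_inter] at hw
      exact le_antisymm (hcy.1 hw.1) (hd.1 hw.2)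
  have := Finset.card_union_add_card_inter cy d
  rw [Finset.card_union_of_disjoint hdisj] at hA
  rw [hinter, Finset.card_singleton] at this
  omega

theorem MaxChainIn.card_eq_of_rho_covBy (hcov : ∀ x y : α, x ⋖ y → rho y = rho x + 1)
    {z : α} {c : Finset α} (hc : MaxChainIn (Set.Iic z) c) : c.card = rho z + 1 := by
  induction z using WellFoundedLT.induction generalizing c with
  | _ z ih =>
  have hzc : z ∈ c := hc.mem_of_forall_le_or_le le_rfl fun w hw => .inl (hc.1 hw)
  rcases (c.erase z).eq_empty_or_nonempty with hempty | hne
  · have hcz : c = {z} := by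
      rw [← Finset.insert_erase hzc, hempty]
      rfl
    have hmin : IsMin z := fun w hwz => by
      have := hc.mem_of_forall_le_or_le hwz (by simp [hcz, hwz])
      simp [hcz] at this
      exact this.ge
    rw [hcz, Finset.card_singleton, rho_eq_zero_of_isMin hmin]
  · have hc' : IsChain (· ≤ ·) ((c.erase z : Finset α) : Set α) :=
      hc.2.1.mono (Finset.coe_subset.mpr (c.erase_subset z))
    obtain ⟨m, hm, hmax⟩ := exists_greatest_of_isChain hne hc'
    have hmz : m < z := lt_of_le_of_ne (hc.1 (Finset.mem_of_mem_erase hm))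
      (Finset.ne_of_mem_erase hm)
    have hle : ∀ w ∈ c, w = z ∨ w ≤ m := fun w hw =>
      (eq_or_ne w z).imp_right fun hwz => hmax w (Finset.mem_erase.mpr ⟨hwz, hw⟩)
    have hmax' : MaxChainIn (Set.Iic m) (c.erase z) := by
      refine ⟨fun w hw => hmax w hw, hc', fun u hu hcu hsub => ?_⟩
      have := hc.2.2 (insert z u)
        (by rw [Finset.coe_insert]
            exact Set.insert_subset le_rfl (hu.trans (Set.Iic_subset_Iic.mpr hmz.le)))
        (by rw [Finset.coe_insert]
            exact hcu.insert fun b hb _ => .inr ((hu hb).trans hmz.le))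
        (fun w hw => by
          rcases eq_or_ne w z with rfl | hwz
          · exact Finset.mem_insert_self _ _
          · exact Finset.mem_insert_of_mem (hsub (Finset.mem_erase.mpr ⟨hwz, hw⟩)))
      refine Finset.Subset.antisymm hsub fun w hw => Finset.mem_erase.mpr
        ⟨fun hwz => (hu hw).not_gt (hwz ▸ hmz), this ▸ Finset.mem_insert_of_mem hw⟩
    have hmz' : m ⋖ z := ⟨hmz, fun w hmw hwz => by
      have := hc.mem_of_forall_le_or_le hwz.le fun v hv =>
        (hle v hv).elim (fun h => .inr (h ▸ hwz.le)) fun h => .inl (h.trans hmw.le)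
      exact (hle w this).elim hwz.ne (fun h => h.not_gt hmw)⟩
    rw [← Finset.card_erase_add_one hzc, ih m hmz hmax', hcov m z hmz']

end Graded

theorem isGradedOfRank_of_rho_covBy [PartialOrder α] [Finite α] [Nonempty α] {n : ℕ}
    (hcov : ∀ x y : α, x ⋖ y → rho y = rho x + 1) (hmax : ∀ x : α, IsMax x → rho x = n) :
    IsGradedOfRank α n := by
  intro c hsub hc hmaxc
  have hne : c.Nonempty := by
    rcases c.eq_empty_or_nonempty with rfl | hne
    · obtain ⟨a⟩ := ‹Nonempty α›
      exact absurd (hmaxc {a} (by simp) (by simp) (Finset.empty_subset _)) (by simp)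
    · exact hne
  obtain ⟨m, hm, hmtop⟩ := exists_greatest_of_isChain hne hc
  have hc' : MaxChainIn Set.univ c := ⟨hsub, hc, hmaxc⟩
  have hmmax : IsMax m := fun w hmw => hmtop w
    (hc'.mem_of_forall_le_or_le trivial fun v hv => .inl ((hmtop v hv).trans hmw))
  rw [(hc'.mono (fun v hv => hmtop v hv) (Set.subset_univ _)).card_eq_of_rho_covBy hcov,
    hmax m hmmax]

section Euler

variable [PartialOrder α]

def chi (T : Set α) : ℤ := ∑ᶠ y ∈ T, (-1 : ℤ) ^ rho y

theorem chi_image [PartialOrder β] {f : α → β} (hf : Function.Injective f)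
    (hrho : ∀ a, rho (f a) = rho a) (T : Set α) : chi (f '' T) = chi T := by
  rw [chi, finsum_mem_image hf.injOn]
  simp only [hrho, chi]

theorem chi_insert [Finite α] {a : α} {T : Set α} (ha : a ∉ T) :
    chi (insert a T) = (-1) ^ rho a + chi T :=
  finsum_mem_insert _ ha T.toFinite

theorem chi_union [Finite α] {S T : Set α} (h : Disjoint S T) : chi (S ∪ T) = chi S + chi T :=
  finsum_mem_union h S.toFinite T.toFinite

theorem chi_eq_ncard_mul [Finite α] {T : Set α} {c : ℤ} (h : ∀ y ∈ T, (-1) ^ rho y = c) :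
    chi T = T.ncard * c := by
  rw [chi, finsum_mem_congr rfl h, finsum_mem_eq_finite_toFinset_sum _ T.toFinite,
    Finset.sum_const, nsmul_eq_mul, Set.ncard_eq_toFinset_card T T.toFinite]

theorem chi_eq_ncard_sub_ncard [Finite α] (T : Set α) :
    chi T = ({y ∈ T | Even (rho y)}.ncard : ℤ) - {y ∈ T | Odd (rho y)}.ncard := by
  have hsplit : T = {y ∈ T | Even (rho y)} ∪ {y ∈ T | Odd (rho y)} := by
    ext y
    simp only [Set.mem_union, Set.mem_ofPred_eq, ← and_or_left, Nat.even_or_odd, and_true]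
  have hdisj : Disjoint {y ∈ T | Even (rho y)} {y ∈ T | Odd (rho y)} :=
    Set.disjoint_left.mpr fun y hy hy' => Nat.not_odd_iff_even.mpr hy.2 hy'.2
  rw [hsplit, chi_union hdisj, chi_eq_ncard_mul fun y hy => hy.2.neg_one_pow,
    chi_eq_ncard_mul fun y hy => hy.2.neg_one_pow, ← hsplit]
  ring

theorem balancedIntervalsIn_univ_iff [Finite α] :
    BalancedIntervalsIn (Set.univ : Set α) ↔ ∀ s t : α, s < t → chi (Set.Icc s t) = 0 := by
  simp only [BalancedIntervalsIn, Set.mem_univ, true_implies, chi_eq_ncard_sub_ncard,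
    sub_eq_zero, Nat.cast_inj]

theorem BalancedIntervalsIn.chi_Icc [Finite α] (h : BalancedIntervalsIn (Set.univ : Set α))
    {s t : α} (hst : s < t) : chi (Set.Icc s t) = 0 :=
  balancedIntervalsIn_univ_iff.mp h s t hst

theorem BalancedIntervalsIn.of_orderIso [Finite α] [PartialOrder β] [Finite β] (e : α ≃o β)
    (h : BalancedIntervalsIn (Set.univ : Set α)) : BalancedIntervalsIn (Set.univ : Set β) := by
  refine balancedIntervalsIn_univ_iff.mpr fun s t hst => ?_
  rw [← e.apply_symm_apply s, ← e.apply_symm_apply t, ← e.image_Icc,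
    chi_image e.injective (rho_orderIso e)]
  exact h.chi_Icc (e.symm.lt_iff_lt.mpr hst)

theorem BalancedIntervalsIn.ncard_Ioo_eq_two [Finite α]
    (h : BalancedIntervalsIn (Set.univ : Set α)) {x z : α} (hxz : x < z)
    (hr : rho z = rho x + 2) : (Set.Ioo x z).ncard = 2 := by
  have hmid : ∀ y ∈ Set.Ioo x z, (-1 : ℤ) ^ rho y = -(-1) ^ rho x := fun y hy => by
    have := rho_lt_rho hy.1
    have := rho_lt_rho hy.2
    rw [show rho y = rho x + 1 by omega, pow_succ]
    ring
  have := h.chi_Icc hxz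
  rw [← Set.Ico_insert_right hxz.le, ← Set.Ioo_insert_left hxz,
    chi_insert (by simp [hxz.ne']), chi_insert (by simp), chi_eq_ncard_mul hmid, hr,
    pow_add] at this
  have hsign : (-1 : ℤ) ^ rho x ≠ 0 := pow_ne_zero _ (by norm_num)
  have : ((2 : ℤ) - (Set.Ioo x z).ncard) * (-1) ^ rho x = 0 := by linear_combination this
  have := (mul_eq_zero.mp this).resolve_right hsign
  omega

end Euler

namespace IsSFS

variable [PartialOrder α] [PartialOrder β] {σ : α → β}

theorem monotone (hσ : IsSFS σ) : Monotone σ := hσ.1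

theorem rho_le_rho (hσ : IsSFS σ) (y : α) : rho y ≤ rho (σ y) := hσ.2.1 y

theorem surjective (hσ : IsSFS σ) : Function.Surjective σ := hσ.2.2.1

theorem exists_le_map_eq_rho_eq (hσ : IsSFS σ) {y : α} {x : β} (h : σ y ≤ x) :
    ∃ y', y ≤ y' ∧ σ y' = x ∧ rho y' = rho x :=
  hσ.2.2.2.1 y x h

theorem chi_fiber (hσ : IsSFS σ) {y : α} {x : β} (h : σ y ≤ x) :
    chi {y' | σ y' = x ∧ y ≤ y'} = (-1) ^ rho x :=
  hσ.2.2.2.2 y x h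

theorem exists_map_eq_rho_eq (hσ : IsSFS σ) (x : β) : ∃ y, σ y = x ∧ rho y = rho x := by
  obtain ⟨y₀, rfl⟩ := hσ.surjective x
  obtain ⟨y, -, h⟩ := hσ.exists_le_map_eq_rho_eq le_rfl
  exact ⟨y, h⟩

theorem map_bot [OrderBot α] [OrderBot β] (hσ : IsSFS σ) : σ ⊥ = ⊥ := by
  obtain ⟨y, hy⟩ := hσ.surjective ⊥
  exact le_bot_iff.mp (hy ▸ hσ.monotone bot_le)

theorem chi_preimage [Finite α] [Finite β] (hσ : IsSFS σ) (s : α) (U : Set β) :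
    chi {y | s ≤ y ∧ σ y ∈ U} = chi {x | σ s ≤ x ∧ x ∈ U} := by
  have hunion : {y | s ≤ y ∧ σ y ∈ U} =
      ⋃ x ∈ {x | σ s ≤ x ∧ x ∈ U}, {y | σ y = x ∧ s ≤ y} := by
    ext y
    simp only [Set.mem_iUnion, Set.mem_ofPred_eq, exists_prop]
    constructor
    · rintro ⟨hsy, hU⟩
      exact ⟨σ y, ⟨hσ.monotone hsy, hU⟩, rfl, hsy⟩
    · rintro ⟨x, ⟨-, hU⟩, rfl, hsy⟩
      exact ⟨hsy, hU⟩
  rw [chi, hunion, finsum_mem_biUnion (fun x _ x' _ hne => Set.disjoint_left.mpr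
    fun y hy hy' => hne (hy.1.symm.trans hy'.1)) (Set.toFinite _) fun _ _ => Set.toFinite _]
  exact finsum_mem_congr rfl fun x hx => hσ.chi_fiber hx.1

theorem chi_Ici [Finite α] [Finite β] (hσ : IsSFS σ) (s : α) :
    chi (Set.Ici s) = chi (Set.Ici (σ s)) := by
  simpa [Set.Ici] using hσ.chi_preimage s Set.univ

theorem chi_Icc_eq [Finite α] [Finite β] (hσ : IsSFS σ) {s t : α}
    (ht : ∀ p, p ≤ t ↔ σ p ≤ σ t) : chi (Set.Icc s t) = chi (Set.Icc (σ s) (σ t)) := by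
  simpa [Set.Icc, ht] using hσ.chi_preimage s (Set.Iic (σ t))

end IsSFS

theorem IsGradedOfRank.chi_Ici [PartialOrder α] [Finite α] {n : ℕ} (hg : IsGradedOfRank α n)
    {x : α} (hx : n ≤ rho x + 1) :
    chi (Set.Ici x) = (1 - {z | x ⋖ z}.ncard) * (-1) ^ rho x := by
  have hIci : Set.Ici x = insert x {z | x ⋖ z} := by
    ext z
    simp only [Set.mem_Ici, Set.mem_insert_iff, Set.mem_ofPred_eq]
    constructor
    · intro h
      rcases h.eq_or_lt with rfl | h
      · exact .inl rfl
      · have := rho_lt_rho h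
        have := hg.rho_le z
        exact .inr (covBy_of_rho_eq_add_one h (by omega))
    · rintro (rfl | h)
      · exact le_rfl
      · exact h.1.le
  rw [hIci, chi_insert fun h => lt_irrefl x h.1, chi_eq_ncard_mul (c := -(-1) ^ rho x)
    fun z hz => by rw [hg.rho_covBy hz, pow_succ]; ring]
  ring

theorem IsSFS.ncard_covBy_eq [PartialOrder α] [Finite α] [PartialOrder β] [Finite β] {n : ℕ}
    {σ : α → β} (hσ : IsSFS σ) (hgα : IsGradedOfRank α n) (hgβ : IsGradedOfRank β n) {x : α}
    (hx : rho x + 1 = n) :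
    (rho (σ x) = rho x ∧ {z | x ⋖ z}.ncard = {z | σ x ⋖ z}.ncard) ∨
      (rho (σ x) = n ∧ {z | x ⋖ z}.ncard = 2) := by
  have key := hσ.chi_Ici x
  have := hσ.rho_le_rho x
  have := hgβ.rho_le (σ x)
  rw [hgα.chi_Ici hx.ge, hgβ.chi_Ici (by omega)] at key
  have hsign : (-1 : ℤ) ^ rho x ≠ 0 := pow_ne_zero _ (by norm_num)
  rcases (show rho (σ x) = rho x ∨ rho (σ x) = n by omega) with h | h
  · rw [h] at key
    have := mul_right_cancel₀ hsign key
    exact .inl ⟨h, by omega⟩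
  · have hnone : {z | σ x ⋖ z} = ∅ := Set.eq_empty_of_forall_notMem fun z hz => by
      have := hgβ.rho_covBy hz
      have := hgβ.rho_le z
      omega
    rw [hnone, Set.ncard_empty, h, ← hx, pow_succ] at key
    have : (1 - {z | x ⋖ z}.ncard : ℤ) = -1 :=
      mul_right_cancel₀ hsign (by linear_combination key)
    exact .inr ⟨h, by omega⟩

theorem mem_boundary_iff [PartialOrder α] {n : ℕ} {y : α} :
    y ∈ boundary α n ↔ ∃ x, rho x = n - 1 ∧ {z | x ⋖ z}.ncard = 1 ∧ y ≤ x := by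
  simp [boundary, boundaryIn]

theorem isLowerSet_boundary [PartialOrder α] (n : ℕ) : IsLowerSet (boundary α n) :=
  fun _ _ h hy =>
    let ⟨x, h₁, h₂, h₃⟩ := mem_boundary_iff.mp hy
    mem_boundary_iff.mpr ⟨x, h₁, h₂, h.trans h₃⟩

theorem IsSFS.preimage_boundary [PartialOrder α] [Finite α] [PartialOrder β] [Finite β]
    {n : ℕ} {σ : α → β} (hσ : IsSFS σ) (hgα : IsGradedOfRank α n)
    (hgβ : IsGradedOfRank β n) (hn : 1 ≤ n) : σ ⁻¹' boundary β n = boundary α n := by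
  ext y
  rw [Set.mem_preimage, mem_boundary_iff, mem_boundary_iff]
  constructor
  · rintro ⟨x, hx, hx₁, hyx⟩
    obtain ⟨y', hyy', rfl, hy'⟩ := hσ.exists_le_map_eq_rho_eq hyx
    rcases hσ.ncard_covBy_eq hgα hgβ (x := y') (by omega) with ⟨-, h⟩ | ⟨h, -⟩
    · exact ⟨y', by omega, h.trans hx₁, hyy'⟩
    · omega
  · rintro ⟨x, hx, hx₁, hyx⟩
    rcases hσ.ncard_covBy_eq hgα hgβ (x := x) (by omega) with ⟨h, h'⟩ | ⟨-, h⟩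
    · exact ⟨σ x, by omega, h' ▸ hx₁, hσ.monotone hyx⟩
    · omega

namespace ExtP

section Basic

variable {σ : α → β} {G : Set β}

@[elab_as_elim]
theorem induction {motive : ExtP σ G → Prop} (dom : ∀ y, motive (inclDom y))
    (compl : ∀ x, motive (inclCompl x)) (p : ExtP σ G) : motive p := by
  rcases p with ⟨y | x⟩
  · exact dom y
  · exact compl x

theorem inclDom_injective : Function.Injective (inclDom : α → ExtP σ G) :=
  fun _ _ h => Sum.inl_injective (congrArg elt h)

@[simp]
theorem extMap_inclDom (y : α) : extMap σ G (inclDom y) = σ y := rfl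

@[simp]
theorem extMap_inclCompl (x : {x : β // x ∉ G}) : extMap σ G (inclCompl x) = x := rfl

theorem exists_eq_inclDom_of_extMap_le [PartialOrder β] (hG : IsLowerSet G) {p : ExtP σ G} {x : β}
    (hx : x ∈ G) (h : extMap σ G p ≤ x) : ∃ y, p = inclDom y := by
  induction p using ExtP.induction with
  | dom y => exact ⟨y, rfl⟩
  | compl x' => exact absurd (hG h hx) x'.2

end Basic

section Order

variable [PartialOrder α] [PartialOrder β] {σ : α → β} {G : Set β}

theorem inclDom_le_inclDom {y y' : α} : (inclDom y : ExtP σ G) ≤ inclDom y' ↔ y ≤ y' :=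
  Iff.rfl

theorem inclDom_lt_inclDom {y y' : α} : (inclDom y : ExtP σ G) < inclDom y' ↔ y < y' := by
  simp only [lt_iff_le_not_ge, inclDom_le_inclDom]

theorem inclCompl_le_inclCompl {x x' : {x : β // x ∉ G}} :
    (inclCompl x : ExtP σ G) ≤ inclCompl x' ↔ (x : β) ≤ x' :=
  Iff.rfl

theorem inclCompl_lt_inclCompl {x x' : {x : β // x ∉ G}} :
    (inclCompl x : ExtP σ G) < inclCompl x' ↔ (x : β) < x' := by
  simp only [lt_iff_le_not_ge, inclCompl_le_inclCompl]

theorem not_inclCompl_le_inclDom {x : {x : β // x ∉ G}} {y : α} :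
    ¬(inclCompl x : ExtP σ G) ≤ inclDom y :=
  id

theorem inclDom_le_inclCompl (hσ : Monotone σ) {y : α} {x : {x : β // x ∉ G}} :
    (inclDom y : ExtP σ G) ≤ inclCompl x ↔ σ y ≤ x :=
  ⟨fun ⟨_, hyy', h⟩ => (hσ hyy').trans h, fun h => ⟨y, le_rfl, h⟩⟩

theorem inclDom_lt_inclCompl (hσ : Monotone σ) {y : α} {x : {x : β // x ∉ G}} :
    (inclDom y : ExtP σ G) < inclCompl x ↔ σ y ≤ x :=
  ⟨fun h => (inclDom_le_inclCompl hσ).mp h.le,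
    fun h => lt_of_le_not_ge ((inclDom_le_inclCompl hσ).mpr h) not_inclCompl_le_inclDom⟩

theorem le_inclCompl_iff (hσ : Monotone σ) {p : ExtP σ G} {x : {x : β // x ∉ G}} :
    p ≤ inclCompl x ↔ extMap σ G p ≤ x := by
  induction p using ExtP.induction with
  | dom y => exact inclDom_le_inclCompl hσ
  | compl x' => exact inclCompl_le_inclCompl

theorem exists_eq_inclDom_of_le {p : ExtP σ G} {y : α} (h : p ≤ inclDom y) :
    ∃ y', p = inclDom y' ∧ y' ≤ y := by
  induction p using ExtP.induction with
  | dom y' => exact ⟨y', rfl, h⟩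
  | compl x => exact absurd h not_inclCompl_le_inclDom

theorem monotone_extMap (hσ : Monotone σ) : Monotone (extMap σ G) := by
  intro p p' h
  induction p' using ExtP.induction with
  | dom y' =>
    obtain ⟨y, rfl, hy⟩ := exists_eq_inclDom_of_le h
    exact hσ hy
  | compl x' => exact (le_inclCompl_iff hσ).mp h

def inclDomEmb : α ↪o ExtP σ G := OrderEmbedding.ofMapLEIff inclDom fun _ _ => Iff.rfl

theorem rho_inclDom [Finite α] [Finite β] (y : α) : rho (inclDom y : ExtP σ G) = rho y :=
  rho_apply_of_isLowerSet_range inclDomEmb (fun _ _ h ⟨_, hy⟩ =>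
    let ⟨y', hp, _⟩ := exists_eq_inclDom_of_le (hy ▸ h)
    ⟨y', hp.symm⟩) y

end Order

section Fibers

variable [PartialOrder α] [PartialOrder γ] [PartialOrder β] {σ : α → γ}
  {ι : γ ↪o β}

theorem fiber_inclDom (y : α) (z : γ) :
    {p | extMap (fun y => ι (σ y)) (Set.range ι) p = ι z ∧ inclDom y ≤ p} =
      inclDom '' {y' | σ y' = z ∧ y ≤ y'} := by
  ext p
  induction p using ExtP.induction with
  | dom y' => simp [inclDom_injective.eq_iff, inclDom_le_inclDom]
  | compl x =>
    constructor
    · rintro ⟨h, -⟩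
      exact absurd ⟨z, h.symm⟩ x.2
    · rintro ⟨y', -, h⟩
      exact absurd (congrArg elt h) Sum.inl_ne_inr

theorem fiber_inclCompl {p : ExtP (fun y => ι (σ y)) (Set.range ι)}
    {x : {x : β // x ∉ Set.range ι}} (hp : p ≤ inclCompl x) :
    {p' | extMap (fun y => ι (σ y)) (Set.range ι) p' = x ∧ p ≤ p'} = {inclCompl x} := by
  ext p'
  simp only [Set.mem_ofPred_eq, Set.mem_singleton_iff]
  refine ⟨fun ⟨h, _⟩ => ?_, fun h => ⟨h ▸ rfl, h ▸ hp⟩⟩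
  induction p' using ExtP.induction with
  | dom y => exact absurd ⟨σ y, h⟩ x.2
  | compl x' => exact congrArg inclCompl (Subtype.ext h)

end Fibers

section Extension

variable [PartialOrder α] [Finite α] [PartialOrder γ] [Finite γ]
  [PartialOrder β] [Finite β] {σ : α → γ} {ι : γ ↪o β}

theorem rho_inclCompl (hσ : IsSFS σ) (hι : IsLowerSet (Set.range ι))
    (x : {x : β // x ∉ Set.range ι}) :
    rho (inclCompl x : ExtP (fun y => ι (σ y)) (Set.range ι)) = rho (x : β) := by
  have hmono : Monotone fun y => ι (σ y) := ι.monotone.comp hσ.monotone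
  have hrhoι : ∀ z, rho (ι z) = rho z := rho_apply_of_isLowerSet_range ι hι
  obtain ⟨x, hx⟩ := x
  show rho (inclCompl ⟨x, hx⟩ : ExtP (fun y => ι (σ y)) (Set.range ι)) = rho x
  induction x using WellFoundedLT.induction with
  | _ x ih =>
  refine le_antisymm (rho_le_of_forall_lt fun p hp => ?_) ?_
  · induction p using ExtP.induction with
    | dom y =>
      have hlt : ι (σ y) < x :=
        lt_of_le_of_ne ((inclDom_lt_inclCompl hmono).mp hp) fun h => hx ⟨σ y, h⟩
      calc rho (inclDom y : ExtP (fun y => ι (σ y)) (Set.range ι)) = rho y := rho_inclDom y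
        _ ≤ rho (σ y) := hσ.rho_le_rho y
        _ = rho (ι (σ y)) := (hrhoι _).symm
        _ < rho x := rho_lt_rho hlt
    | compl x' =>
      have hlt : (x' : β) < x := inclCompl_lt_inclCompl.mp hp
      rw [ih x' hlt x'.2]
      exact rho_lt_rho hlt
  · rcases eq_or_ne (rho x) 0 with h | h
    · omega
    obtain ⟨x', hx'x, hx'⟩ := exists_lt_rho_add_one_eq h
    by_cases hx'ι : x' ∈ Set.range ι
    · obtain ⟨z, rfl⟩ := hx'ι
      obtain ⟨y, rfl, hy⟩ := hσ.exists_map_eq_rho_eq z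
      have := rho_lt_rho ((inclDom_lt_inclCompl hmono (x := ⟨x, hx⟩)).mpr hx'x.le)
      rw [rho_inclDom, hy, ← hrhoι] at this
      omega
    · have := rho_lt_rho (inclCompl_lt_inclCompl (σ := fun y => ι (σ y))
        (x := ⟨x', hx'ι⟩) (x' := ⟨x, hx⟩) |>.mpr hx'x)
      rw [ih x' hx'x hx'ι] at this
      omega

end Extension

end ExtP

section Extension

open ExtP

variable [PartialOrder α] [Finite α] [PartialOrder γ] [Finite γ]
  [PartialOrder β] [Finite β] {σ : α → γ} {ι : γ ↪o β}

theorem IsSFS.extension (hσ : IsSFS σ) (hι : IsLowerSet (Set.range ι)) :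
    IsSFS (extMap (fun y => ι (σ y)) (Set.range ι)) := by
  have hmono : Monotone fun y => ι (σ y) := ι.monotone.comp hσ.monotone
  have hrhoι : ∀ z, rho (ι z) = rho z := rho_apply_of_isLowerSet_range ι hι
  refine ⟨monotone_extMap hmono, fun p => ?_, fun x => ?_, fun p x hpx => ?_, fun p x hpx => ?_⟩
  · induction p using ExtP.induction with
    | dom y => simpa [rho_inclDom, hrhoι] using hσ.rho_le_rho y
    | compl x => exact (rho_inclCompl hσ hι x).le
  · by_cases hx : x ∈ Set.range ι
    · obtain ⟨z, rfl⟩ := hx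
      obtain ⟨y, rfl⟩ := hσ.surjective z
      exact ⟨inclDom y, rfl⟩
    · exact ⟨inclCompl ⟨x, hx⟩, rfl⟩
  · by_cases hx : x ∈ Set.range ι
    · obtain ⟨z, rfl⟩ := hx
      obtain ⟨y, rfl⟩ := exists_eq_inclDom_of_extMap_le hι ⟨z, rfl⟩ hpx
      obtain ⟨y', hyy', rfl, hy'⟩ := hσ.exists_le_map_eq_rho_eq (ι.le_iff_le.mp hpx)
      exact ⟨inclDom y', hyy', rfl, by rw [rho_inclDom, hy', hrhoι]⟩
    · exact ⟨inclCompl ⟨x, hx⟩, (le_inclCompl_iff hmono).mpr hpx, rfl, rho_inclCompl hσ hι _⟩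
  · by_cases hx : x ∈ Set.range ι
    · obtain ⟨z, rfl⟩ := hx
      obtain ⟨y, rfl⟩ := exists_eq_inclDom_of_extMap_le hι ⟨z, rfl⟩ hpx
      show chi _ = _
      rw [fiber_inclDom, chi_image inclDom_injective rho_inclDom, hrhoι]
      exact hσ.chi_fiber (ι.le_iff_le.mp hpx)
    · rw [fiber_inclCompl ((le_inclCompl_iff hmono (x := ⟨x, hx⟩)).mpr hpx),
        finsum_mem_singleton, rho_inclCompl hσ hι]

theorem BalancedIntervalsIn.extension (hσ : IsSFS σ) (hι : IsLowerSet (Set.range ι))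
    (hα : BalancedIntervalsIn (Set.univ : Set α)) (hβ : BalancedIntervalsIn (Set.univ : Set β)) :
    BalancedIntervalsIn (Set.univ : Set (ExtP (fun y => ι (σ y)) (Set.range ι))) := by
  have hmono : Monotone fun y => ι (σ y) := ι.monotone.comp hσ.monotone
  refine balancedIntervalsIn_univ_iff.mpr fun s t hst => ?_
  induction t using ExtP.induction with
  | dom b =>
    obtain ⟨a, rfl, -⟩ := exists_eq_inclDom_of_le hst.le
    have hIcc : Set.Icc (inclDom a) (inclDom b) =
        (inclDom '' Set.Icc a b : Set (ExtP (fun y => ι (σ y)) (Set.range ι))) := by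
      ext p
      constructor
      · rintro ⟨hap, hpb⟩
        obtain ⟨y, rfl, hyb⟩ := exists_eq_inclDom_of_le hpb
        exact ⟨y, ⟨hap, hyb⟩, rfl⟩
      · rintro ⟨y, ⟨hay, hyb⟩, rfl⟩
        exact ⟨hay, hyb⟩
    rw [hIcc, chi_image inclDom_injective rho_inclDom]
    exact hα.chi_Icc (inclDom_lt_inclDom.mp hst)
  | compl x =>
    rw [(hσ.extension hι).chi_Icc_eq fun p => le_inclCompl_iff hmono]
    refine hβ.chi_Icc ?_
    induction s using ExtP.induction with
    | dom a => exact lt_of_le_of_ne ((inclDom_lt_inclCompl hmono).mp hst) fun h => x.2 ⟨σ a, h⟩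
    | compl x' => exact inclCompl_lt_inclCompl.mp hst

end Extension

namespace Semisusp

section Basic

variable {S : Set α}

@[elab_as_elim]
theorem withTop_induction {motive : WithTop (Semisusp α S) → Prop} (top : motive ⊤)
    (coe_q : motive (q : Semisusp α S)) (coe_incl : ∀ a, motive (incl a : Semisusp α S))
    (x : WithTop (Semisusp α S)) : motive x := by
  induction x using WithTop.recTopCoe with
  | top => exact top
  | coe s =>
    rcases s with ⟨_ | a⟩
    · exact coe_q
    · exact coe_incl a

def withTopLift {X : Type} (top q' : X) (f : α → X) (x : WithTop (Semisusp α S)) : X :=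
  Option.elim x top fun s => Option.elim s.toOpt q' f

@[simp]
theorem withTopLift_top {X : Type} (top q' : X) (f : α → X) :
    withTopLift (S := S) top q' f ⊤ = top := rfl

@[simp]
theorem withTopLift_coe_q {X : Type} (top q' : X) (f : α → X) :
    withTopLift top q' f ((q : Semisusp α S) : WithTop (Semisusp α S)) = q' := rfl

@[simp]
theorem withTopLift_coe_incl {X : Type} (top q' : X) (f : α → X) (a : α) :
    withTopLift top q' f ((incl a : Semisusp α S) : WithTop (Semisusp α S)) = f a := rfl

theorem incl_ne_q (a : α) : (incl a : Semisusp α S) ≠ q :=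
  fun h => Option.some_ne_none a (congrArg toOpt h)

end Basic

section Order

variable [PartialOrder α] [OrderBot α] {S : Set α}

theorem incl_le_incl {a b : α} : (incl a : Semisusp α S) ≤ incl b ↔ a ≤ b := Iff.rfl

theorem incl_le_q {a : α} : (incl a : Semisusp α S) ≤ q ↔ a = ⊥ ∨ ∃ s ∈ S, a ≤ s := Iff.rfl

theorem not_q_le_incl {a : α} : ¬(q : Semisusp α S) ≤ incl a := id

def embTop : α ↪o WithTop (Semisusp α S) :=
  OrderEmbedding.ofMapLEIff (fun a => ((incl a : Semisusp α S) : WithTop (Semisusp α S)))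
    fun _ _ => WithTop.coe_le_coe

@[simp]
theorem embTop_apply (a : α) :
    (embTop a : WithTop (Semisusp α S)) = ((incl a : Semisusp α S) : WithTop (Semisusp α S)) :=
  rfl

theorem coe_incl_le_coe_q_iff (hS : IsLowerSet S) (hbot : ⊥ ∈ S) {a : α} :
    ((incl a : Semisusp α S) : WithTop (Semisusp α S)) ≤ (q : Semisusp α S) ↔ a ∈ S := by
  rw [WithTop.coe_le_coe, incl_le_q]
  exact ⟨fun h => h.elim (· ▸ hbot) fun ⟨s, hs, has⟩ => hS has hs, fun h => .inr ⟨a, h, le_rfl⟩⟩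

theorem isLowerSet_range_embTop :
    IsLowerSet (Set.range (embTop : α ↪o WithTop (Semisusp α S))) := by
  rintro x y hyx ⟨a, rfl⟩
  induction y using withTop_induction with
  | top => exact absurd hyx (WithTop.not_top_le_coe _)
  | coe_q => exact absurd (WithTop.coe_le_coe.mp hyx) not_q_le_incl
  | coe_incl b => exact ⟨b, rfl⟩

theorem top_notMem_range_embTop : (⊤ : WithTop (Semisusp α S)) ∉ Set.range embTop :=
  fun ⟨_, h⟩ => WithTop.coe_ne_top h

theorem coe_q_notMem_range_embTop :
    ((q : Semisusp α S) : WithTop (Semisusp α S)) ∉ Set.range embTop :=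
  fun ⟨a, h⟩ => incl_ne_q a (WithTop.coe_injective h)

theorem eq_top_or_eq_coe_q_of_notMem_range {x : WithTop (Semisusp α S)}
    (hx : x ∉ Set.range embTop) : x = ⊤ ∨ x = (q : Semisusp α S) := by
  induction x using withTop_induction with
  | top => exact .inl rfl
  | coe_q => exact .inr rfl
  | coe_incl a => exact absurd ⟨a, rfl⟩ hx

theorem rho_embTop [Finite α] (a : α) : rho (embTop a : WithTop (Semisusp α S)) = rho a :=
  rho_apply_of_isLowerSet_range embTop isLowerSet_range_embTop a

end Order

theorem rho_add_one_le_of_mem_boundary [PartialOrder α] [Finite α] {n : ℕ} (hn : 1 ≤ n)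
    {a : α} (ha : a ∈ boundary α n) : rho a + 1 ≤ n := by
  obtain ⟨x, hx, -, hax⟩ := mem_boundary_iff.mp ha
  have := rho_mono hax
  omega

section Graded

variable [PartialOrder α] [Finite α] [OrderBot α] {n : ℕ}

local notation "W" => WithTop (Semisusp α (boundary α n))

theorem rho_coe_q (hn : 1 ≤ n) (hbot : ⊥ ∈ boundary α n) :
    rho ((q : Semisusp α (boundary α n)) : W) = n := by
  have hle (a : α) := coe_incl_le_coe_q_iff (isLowerSet_boundary n) hbot (a := a)
  refine le_antisymm (rho_le_of_forall_lt fun y hy => ?_) ?_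
  · induction y using withTop_induction with
    | top => exact absurd hy.le (WithTop.not_top_le_coe _)
    | coe_q => exact absurd hy (lt_irrefl _)
    | coe_incl a =>
      rw [← embTop_apply, rho_embTop]
      have := rho_add_one_le_of_mem_boundary hn ((hle a).mp hy.le)
      omega
  · obtain ⟨x, hx, hx₁, -⟩ := mem_boundary_iff.mp hbot
    have hxq : ((incl x : Semisusp α (boundary α n)) : W) < (q : Semisusp α (boundary α n)) :=
      lt_of_le_of_ne ((hle x).mpr (mem_boundary_iff.mpr ⟨x, hx, hx₁, le_rfl⟩))
        (WithTop.coe_injective.ne (incl_ne_q x))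
    have := rho_lt_rho hxq
    rw [← embTop_apply, rho_embTop] at this
    omega

theorem rho_top (hg : IsGradedOfRank α n) (hn : 1 ≤ n) (hbot : ⊥ ∈ boundary α n) :
    rho (⊤ : W) = n + 1 := by
  refine le_antisymm (rho_le_of_forall_lt fun y hy => ?_) ?_
  · induction y using withTop_induction with
    | top => exact absurd hy (lt_irrefl _)
    | coe_q => rw [rho_coe_q hn hbot]; omega
    | coe_incl a => rw [← embTop_apply, rho_embTop]; have := hg.rho_le a; omega
  · have := rho_lt_rho (WithTop.coe_lt_top (q : Semisusp α (boundary α n)))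
    rw [rho_coe_q hn hbot] at this
    omega

theorem rho_covBy_withTop (hg : IsGradedOfRank α n) (hn : 1 ≤ n) (hbot : ⊥ ∈ boundary α n)
    {u v : W} (h : u ⋖ v) : rho v = rho u + 1 := by
  have hle (a : α) := coe_incl_le_coe_q_iff (isLowerSet_boundary n) hbot (a := a)
  induction v using withTop_induction with
  | top =>
    rw [rho_top hg hn hbot]
    induction u using withTop_induction with
    | top => exact absurd h.1 (lt_irrefl _)
    | coe_q => rw [rho_coe_q hn hbot]
    | coe_incl a =>
      have hmax : IsMax a := fun b hab => by
        by_contra hba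
        exact h.2 (embTop.lt_iff_lt.mpr (lt_of_le_not_ge hab hba)) (WithTop.coe_lt_top _)
      rw [← embTop_apply, rho_embTop, hg.rho_eq_of_isMax hmax]
  | coe_q =>
    rw [rho_coe_q hn hbot]
    induction u using withTop_induction with
    | top => exact absurd h.1.le (WithTop.not_top_le_coe _)
    | coe_q => exact absurd h.1 (lt_irrefl _)
    | coe_incl a =>
      obtain ⟨x, hx, hx₁, hax⟩ := mem_boundary_iff.mp ((hle a).mp h.1.le)
      have hxq := (hle x).mpr (mem_boundary_iff.mpr ⟨x, hx, hx₁, le_rfl⟩)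
      have hax' : a = x := by
        by_contra hne
        exact h.2 (embTop.lt_iff_lt.mpr (lt_of_le_of_ne hax hne))
          (lt_of_le_of_ne hxq (WithTop.coe_injective.ne (incl_ne_q x)))
      rw [← embTop_apply, rho_embTop, hax', hx]
      omega
  | coe_incl b =>
    induction u using withTop_induction with
    | top => exact absurd h.1.le (WithTop.not_top_le_coe _)
    | coe_q => exact absurd (WithTop.coe_le_coe.mp h.1.le) not_q_le_incl
    | coe_incl a =>
      rw [← embTop_apply, ← embTop_apply, rho_embTop, rho_embTop]
      exact hg.rho_covBy ⟨embTop.lt_iff_lt.mp h.1,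
        fun c h₁ h₂ => h.2 (embTop.lt_iff_lt.mpr h₁) (embTop.lt_iff_lt.mpr h₂)⟩

theorem isGradedOfRank_withTop (hg : IsGradedOfRank α n) (hn : 1 ≤ n)
    (hbot : ⊥ ∈ boundary α n) : IsGradedOfRank W (n + 1) :=
  isGradedOfRank_of_rho_covBy (fun _ _ => rho_covBy_withTop hg hn hbot)
    fun _ hx => by rw [hx.eq_top]; exact rho_top hg hn hbot

def orderIsoCompl : α ≃o {x : W // x ≠ (q : Semisusp α (boundary α n)) ∧ x ≠ ⊤} :=
  OrderIso.ofSurjective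
    (OrderEmbedding.ofMapLEIff (fun a => ⟨embTop a, WithTop.coe_injective.ne (incl_ne_q a),
      WithTop.coe_ne_top⟩) fun _ _ => embTop.le_iff_le)
    fun x => by
      obtain ⟨x, hxq, hxt⟩ := x
      induction x using withTop_induction with
      | top => exact absurd rfl hxt
      | coe_q => exact absurd rfl hxq
      | coe_incl a => exact ⟨a, rfl⟩

theorem isNearEulerianOfRank_of_balanced (hg : IsGradedOfRank α n) (hn : 1 ≤ n)
    (hbot : ⊥ ∈ boundary α n) (hbal : BalancedIntervalsIn (Set.univ : Set W)) :
    IsNearEulerianOfRank α n :=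
  ⟨W, inferInstance, inferInstance, (q : Semisusp α (boundary α n)), ⊤,
    ⟨⟨⊥, fun _ => bot_le⟩, ⟨⊤, fun _ => le_top⟩, isGradedOfRank_withTop hg hn hbot, hbal⟩,
    fun _ => le_top, rho_coe_q hn hbot, WithTop.coe_ne_top, ⟨orderIsoCompl⟩⟩

end Graded

section ExtensionIso

open ExtP

variable [PartialOrder α] [OrderBot α] [PartialOrder γ] [OrderBot γ] {S : Set α}
  {T : Set γ} {σ : α → γ}

def orderIsoExtP (hσ : Monotone σ) (hS : IsLowerSet S) (hT : IsLowerSet T) (hSbot : ⊥ ∈ S)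
    (hTbot : ⊥ ∈ T) (hST : σ ⁻¹' T = S) :
    WithTop (Semisusp α S) ≃o
      ExtP (fun y => (embTop (σ y) : WithTop (Semisusp γ T))) (Set.range embTop) :=
  OrderIso.ofSurjective
    (OrderEmbedding.ofMapLEIff
      (withTopLift (inclCompl ⟨⊤, top_notMem_range_embTop⟩)
        (inclCompl ⟨(q : Semisusp γ T), coe_q_notMem_range_embTop⟩) inclDom)
      fun a b => by
        have hmono : Monotone fun y => (embTop (σ y) : WithTop (Semisusp γ T)) :=
          embTop.monotone.comp hσ
        have hST' (a : α) : σ a ∈ T ↔ a ∈ S := Set.ext_iff.mp hST a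
        induction a using withTop_induction <;> induction b using withTop_induction <;>
          simp only [withTopLift_top, withTopLift_coe_q, withTopLift_coe_incl,
            inclCompl_le_inclCompl, inclDom_le_inclCompl hmono, inclDom_le_inclDom,
            not_inclCompl_le_inclDom] <;>
          simp [coe_incl_le_coe_q_iff hS hSbot, coe_incl_le_coe_q_iff hT hTbot, hST',
            incl_le_incl, not_q_le_incl])
    fun p => by
      induction p using ExtP.induction with
      | dom y => exact ⟨(incl y : Semisusp α S), rfl⟩
      | compl x =>
        rcases eq_top_or_eq_coe_q_of_notMem_range x.2 with h | h
        · exact ⟨⊤, congrArg inclCompl (Subtype.ext h.symm)⟩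
        · exact ⟨(q : Semisusp α S), congrArg inclCompl (Subtype.ext h.symm)⟩

end ExtensionIso

end Semisusp

structure NearEulerianPresentation (γ : Type) [PartialOrder γ] (n : ℕ) where
  Q : Type
  [instPartialOrder : PartialOrder Q]
  [instFinite : Finite Q]
  q₀ : Q
  t₀ : Q
  isEulerianOfRank : IsEulerianOfRank Q (n + 1)
  le_t₀ : ∀ z, z ≤ t₀
  rho_q₀ : rho q₀ = n
  q₀_ne_t₀ : q₀ ≠ t₀
  iso : γ ≃o {x : Q // x ≠ q₀ ∧ x ≠ t₀}

attribute [instance] NearEulerianPresentation.instPartialOrder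
  NearEulerianPresentation.instFinite

theorem IsNearEulerianOfRank.nonempty_presentation [PartialOrder γ] [Finite γ] {n : ℕ}
    (h : IsNearEulerianOfRank γ n) : Nonempty (NearEulerianPresentation γ n) := by
  obtain ⟨Q, _, _, q₀, t₀, hQ, ht₀, hq₀, hne, ⟨f⟩⟩ := h
  exact ⟨⟨Q, q₀, t₀, hQ, ht₀, hq₀, hne, f⟩⟩

namespace NearEulerianPresentation

variable [PartialOrder γ] {n : ℕ} (P : NearEulerianPresentation γ n)

def emb : γ ↪o P.Q := P.iso.toOrderEmbedding.trans (OrderEmbedding.subtype _)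

theorem emb_ne_q₀ (z : γ) : P.emb z ≠ P.q₀ := (P.iso z).2.1

theorem emb_ne_t₀ (z : γ) : P.emb z ≠ P.t₀ := (P.iso z).2.2

theorem mem_range_emb {w : P.Q} (hq : w ≠ P.q₀) (ht : w ≠ P.t₀) : w ∈ Set.range P.emb :=
  ⟨P.iso.symm ⟨w, hq, ht⟩, by simp [emb]⟩

theorem t₀_le_iff {w : P.Q} : P.t₀ ≤ w ↔ w = P.t₀ :=
  ⟨fun h => le_antisymm (P.le_t₀ w) h, fun h => h ▸ le_rfl⟩

theorem isGradedOfRank_Q : IsGradedOfRank P.Q (n + 1) := P.isEulerianOfRank.2.2.1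

theorem balancedIntervalsIn_Q : BalancedIntervalsIn (Set.univ : Set P.Q) :=
  P.isEulerianOfRank.2.2.2

theorem rho_t₀ : rho P.t₀ = n + 1 :=
  P.isGradedOfRank_Q.rho_eq_of_isMax fun z _ => P.le_t₀ z

theorem emb_lt_t₀ (z : γ) : P.emb z < P.t₀ := lt_of_le_of_ne (P.le_t₀ _) (P.emb_ne_t₀ z)

theorem rho_emb_le (z : γ) : rho (P.emb z) ≤ n := by
  have := rho_lt_rho (P.emb_lt_t₀ z)
  rw [P.rho_t₀] at this
  omega

theorem not_q₀_le_emb (z : γ) : ¬P.q₀ ≤ P.emb z := fun h => by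
  have := rho_lt_rho (lt_of_le_of_ne h (P.emb_ne_q₀ z).symm)
  have := P.rho_emb_le z
  rw [P.rho_q₀] at *
  omega

theorem isLowerSet_range_emb : IsLowerSet (Set.range P.emb) := by
  rintro w _ hw ⟨z, rfl⟩
  exact P.mem_range_emb (fun h => P.not_q₀_le_emb z (h ▸ hw))
    fun h => P.emb_ne_t₀ z (P.t₀_le_iff.mp (h ▸ hw))

theorem emb_covBy_emb_iff {x z : γ} : P.emb x ⋖ P.emb z ↔ x ⋖ z :=
  P.isLowerSet_range_emb.ordConnected.apply_covBy_apply_iff P.emb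

theorem one_le [OrderBot γ] (P : NearEulerianPresentation γ n) : 1 ≤ n := by
  obtain ⟨b, hb⟩ := P.isEulerianOfRank.1
  by_contra! hn
  have hbq : b = P.q₀ := (hb P.q₀).eq_or_lt.resolve_right fun h => by
    have := rho_lt_rho h
    rw [P.rho_q₀] at this
    omega
  exact P.not_q₀_le_emb ⊥ (hbq ▸ hb _)

variable [Finite γ]

theorem rho_emb (z : γ) : rho (P.emb z) = rho z :=
  rho_apply_of_isLowerSet_range P.emb P.isLowerSet_range_emb z

theorem setOf_covBy_emb {x : γ} (hx : rho x + 1 = n) :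
    {w | P.emb x ⋖ w} = Set.Ioo (P.emb x) P.t₀ := by
  ext w
  have hrx := P.rho_emb x
  have hrt := P.rho_t₀
  constructor
  · intro h
    have := P.isGradedOfRank_Q.rho_covBy h
    exact ⟨h.1, lt_of_le_of_ne (P.le_t₀ w) fun hw => by rw [hw] at this; omega⟩
  · intro h
    have := rho_lt_rho h.1
    have := rho_lt_rho h.2
    exact covBy_of_rho_eq_add_one h.1 (by omega)

theorem image_setOf_covBy {x : γ} (hx : rho x + 1 = n) :
    P.emb '' {z | x ⋖ z} = Set.Ioo (P.emb x) P.t₀ \ {P.q₀} := by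
  ext w
  constructor
  · rintro ⟨z, hz, rfl⟩
    exact ⟨(P.setOf_covBy_emb hx).subset (P.emb_covBy_emb_iff.mpr hz), P.emb_ne_q₀ z⟩
  · rintro ⟨hw, hwq⟩
    obtain ⟨z, rfl⟩ := P.mem_range_emb hwq hw.2.ne
    exact ⟨z, P.emb_covBy_emb_iff.mp ((P.setOf_covBy_emb hx).symm.subset hw), rfl⟩

/-- An element of corank one has two covers in `Q`, one of which is `q₀` exactly when the
element lies below `q₀`. -/
theorem ncard_setOf_covBy {x : γ} (hx : rho x + 1 = n) :
    {z | x ⋖ z}.ncard = if P.emb x < P.q₀ then 1 else 2 := by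
  have hIoo : (Set.Ioo (P.emb x) P.t₀).ncard = 2 :=
    P.balancedIntervalsIn_Q.ncard_Ioo_eq_two (P.emb_lt_t₀ x) (by rw [P.rho_t₀, P.rho_emb]; omega)
  rw [← Set.ncard_image_of_injective _ P.emb.injective, P.image_setOf_covBy hx]
  split_ifs with h
  · rw [Set.ncard_sdiff_singleton_of_mem (show P.q₀ ∈ Set.Ioo (P.emb x) P.t₀ from
      ⟨h, lt_of_le_of_ne (P.le_t₀ _) P.q₀_ne_t₀⟩), hIoo]
  · rw [Set.sdiff_singleton_eq_self fun hq => h hq.1, hIoo]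

theorem nonempty_setOf_covBy (P : NearEulerianPresentation γ n) {x : γ} (hx : rho x + 1 = n) :
    {z | x ⋖ z}.Nonempty :=
  Set.nonempty_of_ncard_ne_zero (by rw [P.ncard_setOf_covBy hx]; split_ifs <;> simp)

theorem isGradedOfRank [Nonempty γ] (P : NearEulerianPresentation γ n) : IsGradedOfRank γ n := by
  refine isGradedOfRank_of_rho_covBy (fun x y h => ?_) fun x hx => ?_
  · rw [← P.rho_emb, ← P.rho_emb]
    exact P.isGradedOfRank_Q.rho_covBy (P.emb_covBy_emb_iff.mpr h)
  · have hle := P.rho_emb_le x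
    rw [P.rho_emb] at hle
    by_contra hne
    rcases (show rho x + 1 = n ∨ rho x + 1 < n by omega) with h | h
    · obtain ⟨z, hz⟩ := P.nonempty_setOf_covBy h
      exact hx.not_lt hz.1
    · obtain ⟨w, hxw, -⟩ := exists_covBy_le_of_lt (P.emb_lt_t₀ x)
      have hrw := P.isGradedOfRank_Q.rho_covBy hxw
      rw [P.rho_emb] at hrw
      obtain ⟨z, rfl⟩ := P.mem_range_emb (w := w) (fun h' => by rw [h', P.rho_q₀] at hrw; omega)
        fun h' => by rw [h', P.rho_t₀] at hrw; omega
      exact hx.not_lt (P.emb.lt_iff_lt.mp hxw.1)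

variable [OrderBot γ]

theorem mem_boundary_iff_emb_lt {z : γ} : z ∈ boundary γ n ↔ P.emb z < P.q₀ := by
  have hn := P.one_le
  rw [mem_boundary_iff]
  constructor
  · rintro ⟨x, hx, hx₁, hzx⟩
    rw [P.ncard_setOf_covBy (by omega)] at hx₁
    split_ifs at hx₁ with h
    · exact (P.emb.monotone hzx).trans_lt h
    · omega
  · intro h
    obtain ⟨w, hzw, hwq⟩ := exists_le_covBy_of_lt h
    have hrw := P.isGradedOfRank_Q.rho_covBy hwq
    obtain ⟨x, rfl⟩ := P.mem_range_emb hwq.1.ne (hwq.1.trans_le (P.le_t₀ _)).ne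
    rw [P.rho_q₀, P.rho_emb] at hrw
    exact ⟨x, by omega, by rw [P.ncard_setOf_covBy hrw.symm, if_pos hwq.1],
      P.emb.le_iff_le.mp hzw⟩

theorem bot_mem_boundary (P : NearEulerianPresentation γ n) :
    ⊥ ∈ boundary γ n := by
  rw [P.mem_boundary_iff_emb_lt]
  obtain ⟨b, hb⟩ := P.isEulerianOfRank.1
  obtain ⟨z, rfl⟩ := P.isLowerSet_range_emb (hb _) ⟨⊥, rfl⟩
  exact lt_of_le_of_ne ((P.emb.monotone bot_le).trans (hb _)) (P.emb_ne_q₀ ⊥)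

open Semisusp in
def withTopOrderIso : WithTop (Semisusp γ (boundary γ n)) ≃o P.Q :=
  OrderIso.ofSurjective
    (OrderEmbedding.ofMapLEIff (withTopLift P.t₀ P.q₀ P.emb) fun a b => by
      induction a using withTop_induction <;> induction b using withTop_induction <;>
        simp [P.t₀_le_iff, P.q₀_ne_t₀, P.emb_ne_t₀, P.le_t₀, P.not_q₀_le_emb, not_q_le_incl,
          incl_le_incl, coe_incl_le_coe_q_iff (isLowerSet_boundary n) P.bot_mem_boundary,
          P.mem_boundary_iff_emb_lt, (P.emb_ne_q₀ _).le_iff_lt])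
    fun w => by
      by_cases ht : w = P.t₀
      · exact ⟨⊤, ht.symm⟩
      by_cases hq : w = P.q₀
      · exact ⟨(q : Semisusp γ (boundary γ n)), hq.symm⟩
      obtain ⟨z, rfl⟩ := P.mem_range_emb hq ht
      exact ⟨(incl z : Semisusp γ (boundary γ n)), rfl⟩

theorem balancedIntervalsIn_withTop (P : NearEulerianPresentation γ n) :
    BalancedIntervalsIn (Set.univ : Set (WithTop (Semisusp γ (boundary γ n)))) :=
  P.balancedIntervalsIn_Q.of_orderIso P.withTopOrderIso.symm

end NearEulerianPresentation

/-- Let `σ : Π → Γ` be a strong formal subdivision of rank `0` between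
lower Eulerian posets and suppose `Γ` is near-Eulerian (of rank `n`).  Then `Π` is
near-Eulerian, `σ` extends to a strong formal subdivision between the Eulerian posets
obtained from the semisuspensions (namely the extension of `σ` over `Σ̃Γ ∪ {1̂}`, which
is order-isomorphic to `Σ̃Π ∪ {1̂}` by an isomorphism sending the semisuspension vertex
`q_Π` to `q_Γ`), and `σ⁻¹(∂Γ) = ∂Π`. -/
theorem sfs_extends_to_semisuspensions
    (α γ : Type) [PartialOrder α] [Finite α] [OrderBot α]
    [PartialOrder γ] [Finite γ] [OrderBot γ] (n : ℕ)
    (hPi : IsLowerEulerianOfRank α n) (hG : IsNearEulerianOfRank γ n)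
    (σ : α → γ) (hσ : IsSFS σ) :
    IsNearEulerianOfRank α n ∧
    IsSFS (ExtP.extMap
      (fun y => ((Semisusp.incl (σ y) : Semisusp γ (boundary γ n)) :
        WithTop (Semisusp γ (boundary γ n))))
      (Set.range fun z : γ =>
        ((Semisusp.incl z : Semisusp γ (boundary γ n)) :
          WithTop (Semisusp γ (boundary γ n))))) ∧
    (∃ e : ExtP
        (fun y => ((Semisusp.incl (σ y) : Semisusp γ (boundary γ n)) :
          WithTop (Semisusp γ (boundary γ n))))
        (Set.range fun z : γ =>
          ((Semisusp.incl z : Semisusp γ (boundary γ n)) :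
            WithTop (Semisusp γ (boundary γ n)))) ≃o
          WithTop (Semisusp α (boundary α n)),
      ExtP.extMap _ _
          (e.symm ((Semisusp.q : Semisusp α (boundary α n)) :
            WithTop (Semisusp α (boundary α n)))) =
        ((Semisusp.q : Semisusp γ (boundary γ n)) : WithTop (Semisusp γ (boundary γ n)))) ∧
    σ ⁻¹' boundary γ n = boundary α n := by
  obtain ⟨-, hgα, hbalα⟩ := hPi
  obtain ⟨P⟩ := hG.nonempty_presentation
  have hn := P.one_le
  have hbd := hσ.preimage_boundary hgα P.isGradedOfRank hn
  have hbotα : (⊥ : α) ∈ boundary α n := by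
    rw [← hbd, Set.mem_preimage, hσ.map_bot]
    exact P.bot_mem_boundary
  let e := Semisusp.orderIsoExtP hσ.monotone (isLowerSet_boundary n) (isLowerSet_boundary n)
    hbotα P.bot_mem_boundary hbd
  have hbalExt := BalancedIntervalsIn.extension hσ Semisusp.isLowerSet_range_embTop hbalα
    P.balancedIntervalsIn_withTop
  exact ⟨Semisusp.isNearEulerianOfRank_of_balanced hgα hn hbotα (hbalExt.of_orderIso e.symm),
    hσ.extension Semisusp.isLowerSet_range_embTop, ⟨e.symm, rfl⟩, hbd⟩

end CDIndex
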